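/- arXiv:1408.1609 — 3 statements merged into one kernel-verified Lean document; each statement's English description precedes it below -/
import Mathlib

section
/- Let p = (p_i)_{i∈ℕ} and q = (q_i)_{i∈ℕ} be sequences of nonnegative reals with Σ_i p_i = Σ_i q_i = 1, and let H(p) = −Σ_{i∈ℕ} p_i ln p_i and H(q) = −Σ_{i∈ℕ} q_i ln q_i (with the convention 0 ln 0 = 0). If for some constant c ∈ (0, 1/3) one has |p_i − q_i| ≤ c q_i for all i ∈ ℕ, then H(p) ≤ (1 + c) H(q) + c ln 3. -/
/-!
Write `p i = q i * t` with `t = p i / q i ∈ [1 - c, 1 + c]`. Then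
`negMulLog (p i) = t * negMulLog (q i) + q i * negMulLog t`, and `negMulLog t ≤ 1 - t ≤ c`, so
`negMulLog (p i) ≤ (1 + c) * negMulLog (q i) + c * q i`. Summing over `i` gives
`H(p) ≤ (1 + c) H(q) + c`, and `c ≤ c * log 3` because `log 3 > 1`.
-/

open scoped ENNReal

namespace Real

lemma one_le_log_three : 1 ≤ log 3 :=
  le_trans (by norm_num) log_three_gt_d9.le

lemma negMulLog_le_of_abs_sub_le {a b c : ℝ} (ha : 0 ≤ a) (hb₀ : 0 ≤ b) (hb₁ : b ≤ 1)
    (h : |a - b| ≤ c * b) :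
    negMulLog a ≤ (1 + c) * negMulLog b + c * b := by
  obtain ⟨hlow, hupp⟩ := abs_le.mp h
  rcases hb₀.eq_or_lt with rfl | hb
  · obtain rfl : a = 0 := by linarith
    simp
  set t := a / b
  have hat : a = b * t := (mul_div_cancel₀ a hb.ne').symm
  have ht : t ≤ 1 + c := by rw [div_le_iff₀ hb]; linarith
  have ht₀ : 0 ≤ t := div_nonneg ha hb.le
  calc negMulLog a = t * negMulLog b + b * negMulLog t := by rw [hat, negMulLog_mul]
    _ ≤ (1 + c) * negMulLog b + b * (1 - t) := by
        gcongr
        · exact negMulLog_nonneg hb.le hb₁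
        · exact negMulLog_le_one_sub_self ht₀
    _ = (1 + c) * negMulLog b + (b - a) := by rw [hat]; ring
    _ ≤ (1 + c) * negMulLog b + c * b := by linarith

end Real

open Real in
theorem tsum_ofReal_negMulLog_le_of_abs_sub_le {ι : Type*} {p q : ι → ℝ} {c : ℝ}
    (hp : ∀ i, 0 ≤ p i) (hq : ∀ i, 0 ≤ q i) (hqs : HasSum q 1) (hc : 0 ≤ c)
    (hpq : ∀ i, |p i - q i| ≤ c * q i) :
    ∑' i, ENNReal.ofReal (negMulLog (p i)) ≤
      (1 + ENNReal.ofReal c) * ∑' i, ENNReal.ofReal (negMulLog (q i)) + ENNReal.ofReal c := by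
  have hq₁ (i : ι) : q i ≤ 1 := le_hasSum hqs i fun j _ ↦ hq j
  have hterm (i : ι) : ENNReal.ofReal (negMulLog (p i)) ≤
      (1 + ENNReal.ofReal c) * ENNReal.ofReal (negMulLog (q i)) +
        ENNReal.ofReal c * ENNReal.ofReal (q i) := by
    calc ENNReal.ofReal (negMulLog (p i))
        ≤ ENNReal.ofReal ((1 + c) * negMulLog (q i) + c * q i) :=
          ENNReal.ofReal_le_ofReal (negMulLog_le_of_abs_sub_le (hp i) (hq i) (hq₁ i) (hpq i))
      _ ≤ ENNReal.ofReal ((1 + c) * negMulLog (q i)) + ENNReal.ofReal (c * q i) :=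
          ENNReal.ofReal_add_le
      _ = _ := by
          rw [ENNReal.ofReal_mul (by positivity), ENNReal.ofReal_mul hc,
            ENNReal.ofReal_add zero_le_one hc, ENNReal.ofReal_one]
  have hqs' : ∑' i, ENNReal.ofReal (q i) = 1 := by
    rw [← ENNReal.ofReal_tsum_of_nonneg hq hqs.summable, hqs.tsum_eq, ENNReal.ofReal_one]
  calc ∑' i, ENNReal.ofReal (negMulLog (p i))
      ≤ ∑' i, ((1 + ENNReal.ofReal c) * ENNReal.ofReal (negMulLog (q i)) +
          ENNReal.ofReal c * ENNReal.ofReal (q i)) := ENNReal.tsum_le_tsum hterm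
    _ = _ := by rw [ENNReal.tsum_add, ENNReal.tsum_mul_left, ENNReal.tsum_mul_left, hqs', mul_one]

theorem entropy_le_of_close_general (p q : ℕ → ℝ) (hp : ∀ i, 0 ≤ p i) (hq : ∀ i, 0 ≤ q i)
    (hqs : HasSum q 1)
    (c : ℝ) (hc : 0 < c)
    (hpq : ∀ i, |p i - q i| ≤ c * q i) :
    (∑' i, ENNReal.ofReal (Real.negMulLog (p i))) ≤
      (1 + ENNReal.ofReal c) * (∑' i, ENNReal.ofReal (Real.negMulLog (q i))) +
        ENNReal.ofReal (c * Real.log 3) := by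
  calc (∑' i, ENNReal.ofReal (Real.negMulLog (p i)))
      ≤ (1 + ENNReal.ofReal c) * (∑' i, ENNReal.ofReal (Real.negMulLog (q i))) +
          ENNReal.ofReal c := tsum_ofReal_negMulLog_le_of_abs_sub_le hp hq hqs hc.le hpq
    _ ≤ _ := by
        gcongr
        exact le_mul_of_one_le_right hc.le Real.one_le_log_three

/-- If `p, q` are probability vectors on `ℕ` and for some
`c ∈ (0, 1/3)` one has `|p i - q i| ≤ c * q i` for all `i`, then the Shannon
entropies (computed in `ℝ≥0∞`, since they may be infinite) satisfy
`H(p) ≤ (1 + c) * H(q) + c * ln 3`. -/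
theorem entropy_le_of_close (p q : ℕ → ℝ) (hp : ∀ i, 0 ≤ p i) (hq : ∀ i, 0 ≤ q i)
    (hps : HasSum p 1) (hqs : HasSum q 1)
    (c : ℝ) (hc : 0 < c) (hc3 : c < 1 / 3)
    (hpq : ∀ i, |p i - q i| ≤ c * q i) :
    (∑' i, ENNReal.ofReal (Real.negMulLog (p i))) ≤
      (1 + ENNReal.ofReal c) * (∑' i, ENNReal.ofReal (Real.negMulLog (q i))) +
        ENNReal.ofReal (c * Real.log 3) :=
  entropy_le_of_close_general p q hp hq hqs c hc hpq
end

section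
/- Let η be a countable measurable partition of a measurable space (X, 𝓕), and let μ and ν be probability measures on (X, 𝓕). If for some constant c ∈ (0, 1/3) one has |μ(A) − ν(A)| ≤ c ν(A) for every atom A of η, then the partition entropies satisfy H_μ(η) ≤ (1 + c) H_ν(η) + c ln 3, where H_μ(η) = −Σ_{A ∈ η} μ(A) ln μ(A) with the convention 0 ln 0 = 0. -/
open MeasureTheory Set
open scoped ENNReal

/-- A countable measurable partition of `X`, encoded as an `ℕ`-indexed family of
pairwise disjoint measurable sets covering `X`. -/
def IsCountablePartition {X : Type*} [MeasurableSpace X] (η : ℕ → Set X) : Prop :=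
  (∀ i, MeasurableSet (η i)) ∧ Pairwise (Function.onFun Disjoint η) ∧ (⋃ i, η i) = Set.univ

/-- The entropy `H_μ(η) = -∑_A μ(A) log μ(A)` of a countable family of sets,
computed in `ℝ≥0∞` since it may be infinite (`0 log 0 = 0` by convention). -/
noncomputable def partEntropy {X ι : Type*} [MeasurableSpace X]
    (μ : Measure X) (η : ι → Set X) : ℝ≥0∞ :=
  ∑' i, ENNReal.ofReal (Real.negMulLog (μ (η i)).toReal)

/-!
On each atom write `p = μ(A)`, `q = ν(A)` and split `p = q · (p / q)`, so that
`-p log p = (p / q)(-q log q) + q · negMulLog (p / q)`. The first term is at most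
`(1 + c)(-q log q)` because `p / q ≤ 1 + c`, and the second at most `q (1 - p / q) = q - p ≤ c q`
because `negMulLog t ≤ 1 - t`. Summing over the atoms gives `H_μ(η) ≤ (1 + c) H_ν(η) + c`,
and `c ≤ c ln 3`.
-/

theorem Real.negMulLog_le_of_abs_sub_le_s3 {c p q : ℝ} (hp : 0 ≤ p) (hq₀ : 0 ≤ q) (hq₁ : q ≤ 1)
    (h : |p - q| ≤ c * q) :
    negMulLog p ≤ (1 + c) * negMulLog q + c * q := by
  rcases hq₀.eq_or_lt with rfl | hq
  · have hp0 : p = 0 := by simpa using h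
    simp [hp0]
  have hpq : p / q ≤ 1 + c := (div_le_iff₀ hq).2 (by linarith [(abs_le.1 h).2])
  calc negMulLog p = p / q * negMulLog q + q * negMulLog (p / q) := by
        rw [← negMulLog_mul, mul_div_cancel₀ p hq.ne']
    _ ≤ (1 + c) * negMulLog q + q * (1 - p / q) :=
        add_le_add (mul_le_mul_of_nonneg_right hpq (negMulLog_nonneg hq₀ hq₁))
          (mul_le_mul_of_nonneg_left (negMulLog_le_one_sub_self (div_nonneg hp hq₀)) hq₀)
    _ = (1 + c) * negMulLog q + (q - p) := by rw [mul_sub, mul_one, mul_div_cancel₀ p hq.ne']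
    _ ≤ (1 + c) * negMulLog q + c * q := by linarith [(abs_le.1 h).1]

theorem partEntropy_le_of_abs_sub_le {X ι : Type*} [MeasurableSpace X] (η : ι → Set X)
    (μ ν : Measure X) [IsProbabilityMeasure ν] {c : ℝ} (hc : 0 ≤ c)
    (h : ∀ i, |(μ (η i)).toReal - (ν (η i)).toReal| ≤ c * (ν (η i)).toReal) :
    partEntropy μ η ≤
      (1 + ENNReal.ofReal c) * partEntropy ν η + ENNReal.ofReal c * ∑' i, ν (η i) := by
  rw [partEntropy, partEntropy, ← ENNReal.tsum_mul_left, ← ENNReal.tsum_mul_left,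
    ← ENNReal.tsum_add]
  refine ENNReal.tsum_le_tsum fun i => ?_
  have hq₀ : 0 ≤ (ν (η i)).toReal := ENNReal.toReal_nonneg
  have hq₁ : (ν (η i)).toReal ≤ 1 := measureReal_le_one
  have hH : 0 ≤ Real.negMulLog (ν (η i)).toReal := Real.negMulLog_nonneg hq₀ hq₁
  calc ENNReal.ofReal (Real.negMulLog (μ (η i)).toReal)
      ≤ ENNReal.ofReal ((1 + c) * Real.negMulLog (ν (η i)).toReal + c * (ν (η i)).toReal) :=
        ENNReal.ofReal_le_ofReal <|
          Real.negMulLog_le_of_abs_sub_le_s3 ENNReal.toReal_nonneg hq₀ hq₁ (h i)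
    _ = (1 + ENNReal.ofReal c) * ENNReal.ofReal (Real.negMulLog (ν (η i)).toReal) +
          ENNReal.ofReal c * ν (η i) := by
        rw [ENNReal.ofReal_add (by positivity) (by positivity), ENNReal.ofReal_mul (by positivity),
          ENNReal.ofReal_mul hc, ENNReal.ofReal_add zero_le_one hc, ENNReal.ofReal_one,
          ENNReal.ofReal_toReal (measure_ne_top ν _)]

theorem IsCountablePartition.tsum_measure {X : Type*} [MeasurableSpace X] {η : ℕ → Set X}
    (hη : IsCountablePartition η) (μ : Measure X) : ∑' i, μ (η i) = μ univ := by
  obtain ⟨hmeas, hdisj, hcover⟩ := hη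
  rw [← measure_iUnion hdisj hmeas, hcover]

theorem partEntropy_le_of_close_general {X : Type*} [MeasurableSpace X]
    (η : ℕ → Set X) (hpart : IsCountablePartition η)
    (μ ν : Measure X) [IsProbabilityMeasure ν]
    (c : ℝ) (hc : 0 < c)
    (hatoms : ∀ i, |(μ (η i)).toReal - (ν (η i)).toReal| ≤ c * (ν (η i)).toReal) :
    partEntropy μ η ≤ (1 + ENNReal.ofReal c) * partEntropy ν η +
      ENNReal.ofReal (c * Real.log 3) := by
  have hlog : c ≤ c * Real.log 3 :=
    le_mul_of_one_le_right hc.le (by linarith [Real.log_three_gt_d9])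
  calc partEntropy μ η
      ≤ (1 + ENNReal.ofReal c) * partEntropy ν η + ENNReal.ofReal c * ∑' i, ν (η i) :=
        partEntropy_le_of_abs_sub_le η μ ν hc.le hatoms
    _ = (1 + ENNReal.ofReal c) * partEntropy ν η + ENNReal.ofReal c := by
        rw [hpart.tsum_measure, measure_univ, mul_one]
    _ ≤ (1 + ENNReal.ofReal c) * partEntropy ν η + ENNReal.ofReal (c * Real.log 3) := by
        gcongr

/-- If `μ, ν` are probability measures, `η` is a countable
measurable partition, `c ∈ (0, 1/3)`, and `|μ(A) - ν(A)| ≤ c ν(A)` for every atom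
`A` of `η`, then `H_μ(η) ≤ (1 + c) H_ν(η) + c ln 3`. -/
theorem partEntropy_le_of_close {X : Type*} [MeasurableSpace X]
    (η : ℕ → Set X) (hpart : IsCountablePartition η)
    (μ ν : Measure X) [IsProbabilityMeasure μ] [IsProbabilityMeasure ν]
    (c : ℝ) (hc : 0 < c) (hc3 : c < 1 / 3)
    (hatoms : ∀ i, |(μ (η i)).toReal - (ν (η i)).toReal| ≤ c * (ν (η i)).toReal) :
    partEntropy μ η ≤ (1 + ENNReal.ofReal c) * partEntropy ν η +
      ENNReal.ofReal (c * Real.log 3) :=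
  partEntropy_le_of_close_general η hpart μ ν c hc hatoms
end

section
/- Let T be an automorphism of a measurable space (X, 𝓕), let ξ be a countable measurable partition of X, let μ₀ and μ be T-invariant probability measures, let r ∈ ℕ, r ≥ 1, and let ε be a real number with 0 < ε ≤ 1/6. If |μ₀(A) − μ(A)| ≤ ε μ(A) for every atom A of the partition ⋁_{i=0}^{r} T^{-i} ξ, then H_μ(⋁_{i=1}^{r} T^{-i} ξ) ≤ (1 + 2ε) H_{μ₀}(⋁_{i=1}^{r} T^{-i} ξ) + 2ε ln 3. -/
open MeasureTheory Set
open scoped ENNReal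

/-- The atom of the refinement `⋁_{i=k}^{k+r-1} T⁻ⁱ ξ` labelled by the word
`f : Fin r → ℕ`, namely `⋂_j T^{-(k+j)} ξ_{f j}`. -/
def joinAtom {X : Type*} (T : X → X) (ξ : ℕ → Set X) (k r : ℕ) (f : Fin r → ℕ) : Set X :=
  ⋂ j : Fin r, (T^[k + (j : ℕ)]) ⁻¹' (ξ (f j))

open Function

/-!
Every atom of `⋁_{i=1}^{r} T⁻ⁱ ξ` is the countable disjoint union of the atoms of
`⋁_{i=0}^{r} T⁻ⁱ ξ` it contains, so the relative closeness `|μ₀(A) - μ(A)| ≤ ε μ(A)` passes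
to the coarser atoms. For a single atom with `a = μ₀(A)` and `b = μ(A)` this gives
`b ≤ a / (1 - ε)` and `-log b ≤ -log a + ε`, hence
`-b log b ≤ (1 + 2ε)(-a log a) + 2ε log 3 · a` once `ε ≤ 1/2`; summing over the atoms and
using `∑ μ₀(A) ≤ 1` gives the bound.
-/

lemma Real.negMulLog_le_of_abs_sub_le_s7 {a b ε : ℝ} (hε : 0 ≤ ε) (hε2 : ε ≤ 1 / 2)
    (ha : 0 ≤ a) (ha1 : a ≤ 1) (hab : |a - b| ≤ ε * b) :
    Real.negMulLog b ≤ (1 + 2 * ε) * Real.negMulLog a + 2 * ε * Real.log 3 * a := by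
  obtain ⟨hlo, hhi⟩ := abs_le.mp hab
  rcases ha.eq_or_lt with rfl | ha
  · have hb : b = 0 := by nlinarith
    simp [hb]
  have hb : 0 < b := by nlinarith
  have hlog : -Real.log b ≤ -Real.log a + ε := by
    have h := Real.log_le_sub_one_of_pos (div_pos ha hb)
    have hq : a / b ≤ 1 + ε := by rw [div_le_iff₀ hb]; linarith
    rw [Real.log_div ha.ne' hb.ne'] at h
    linarith
  have hL : 0 ≤ -Real.log a := neg_nonneg.mpr (Real.log_nonpos ha.le ha1)
  have h3 : 1 ≤ Real.log 3 := by
    rw [Real.le_log_iff_exp_le (by norm_num)]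
    exact Real.exp_one_lt_three.le
  calc Real.negMulLog b = b * -Real.log b := by simp [Real.negMulLog]
    _ ≤ b * (-Real.log a + ε) := by gcongr
    _ ≤ a / (1 - ε) * (-Real.log a + ε) := by
        gcongr
        rw [le_div_iff₀ (by linarith)]
        linarith
    _ ≤ (1 + 2 * ε) * (a * -Real.log a) + 2 * ε * Real.log 3 * a := by
        rw [div_mul_eq_mul_div, div_le_iff₀ (by linarith)]
        -- `(1 - ε)(1 + 2ε) ≥ 1` and `2 (1 - ε) log 3 ≥ 1` for `ε ≤ 1/2`
        nlinarith [mul_nonneg (mul_nonneg ha.le hL) (mul_nonneg hε (by linarith : 0 ≤ 1 - 2 * ε)),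
          mul_nonneg (mul_nonneg ha.le hε) (by nlinarith : 0 ≤ 2 * (1 - ε) * Real.log 3 - 1)]
    _ = (1 + 2 * ε) * Real.negMulLog a + 2 * ε * Real.log 3 * a := by simp [Real.negMulLog]

section JoinAtom

variable {X : Type*} {T : X → X} {ξ : ℕ → Set X}

lemma measurableSet_joinAtom [MeasurableSpace X] (hT : Measurable T)
    (hξ : ∀ i, MeasurableSet (ξ i)) (k r : ℕ) (f : Fin r → ℕ) :
    MeasurableSet (joinAtom T ξ k r f) :=
  .iInter fun j => hT.iterate _ (hξ (f j))

lemma pairwise_disjoint_joinAtom (hξ : Pairwise (Disjoint on ξ)) (k r : ℕ) :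
    Pairwise (Disjoint on joinAtom T ξ k r) := by
  intro f g hfg
  obtain ⟨j, hj⟩ := ne_iff.mp hfg
  exact (Disjoint.preimage _ (hξ hj)).mono (iInter_subset _ j) (iInter_subset _ j)

lemma joinAtom_succ_cons (k r n : ℕ) (f : Fin r → ℕ) :
    joinAtom T ξ k (r + 1) (Fin.cons n f) = T^[k] ⁻¹' ξ n ∩ joinAtom T ξ (k + 1) r f := by
  ext x
  simp only [joinAtom, mem_iInter, mem_inter_iff, mem_preimage, Fin.forall_fin_succ, Fin.cons_zero,
    Fin.cons_succ, Fin.val_zero, Fin.val_succ, add_zero, ← add_assoc, Nat.add_right_comm k 1]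

lemma iUnion_joinAtom_zero_cons (hξ : ⋃ i, ξ i = univ) (r : ℕ) (f : Fin r → ℕ) :
    ⋃ n, joinAtom T ξ 0 (r + 1) (Fin.cons n f) = joinAtom T ξ 1 r f := by
  simp only [joinAtom_succ_cons, iterate_zero, preimage_id_eq, id_eq, ← iUnion_inter, hξ,
    univ_inter]

end JoinAtom

section MeasureClose

variable {X ι : Type*} [MeasurableSpace X] {μ μ₀ : Measure X}

lemma hasSum_measureReal_iUnion [Countable ι] [IsFiniteMeasure μ] {s : ι → Set X}
    (hs : ∀ i, MeasurableSet (s i)) (hd : Pairwise (Disjoint on s)) :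
    HasSum (fun i => μ.real (s i)) (μ.real (⋃ i, s i)) := by
  have h := measure_iUnion hd hs (μ := μ)
  rw [measureReal_def, h, ENNReal.tsum_toReal_eq fun i => measure_ne_top μ _]
  exact ENNReal.hasSum_toReal (h ▸ measure_ne_top μ _)

lemma abs_measureReal_iUnion_sub_le [Countable ι] [IsFiniteMeasure μ₀] [IsFiniteMeasure μ]
    {s : ι → Set X} (hs : ∀ i, MeasurableSet (s i)) (hd : Pairwise (Disjoint on s)) {ε : ℝ}
    (hclose : ∀ i, |μ₀.real (s i) - μ.real (s i)| ≤ ε * μ.real (s i)) :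
    |μ₀.real (⋃ i, s i) - μ.real (⋃ i, s i)| ≤ ε * μ.real (⋃ i, s i) := by
  have h₀ := hasSum_measureReal_iUnion (μ := μ₀) hs hd
  have h := hasSum_measureReal_iUnion (μ := μ) hs hd
  refine abs_le.mpr ⟨?_, ?_⟩
  · exact hasSum_le (fun i => by linarith [(abs_le.mp (hclose i)).1]) (h.mul_left ε).neg
      (h₀.sub h)
  · exact hasSum_le (fun i => (abs_le.mp (hclose i)).2) (h₀.sub h) (h.mul_left ε)

end MeasureClose

lemma partEntropy_le_of_negMulLog_le {X ι : Type*} [MeasurableSpace X] {μ μ₀ : Measure X}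
    [IsProbabilityMeasure μ₀] {η : ι → Set X} (hη : ∀ i, MeasurableSet (η i))
    (hd : Pairwise (Disjoint on η)) {c d : ℝ}
    (h : ∀ i, Real.negMulLog (μ.real (η i)) ≤
      c * Real.negMulLog (μ₀.real (η i)) + d * μ₀.real (η i)) :
    partEntropy μ η ≤ ENNReal.ofReal c * partEntropy μ₀ η + ENNReal.ofReal d := by
  have hterm : ∀ i, ENNReal.ofReal (Real.negMulLog (μ.real (η i))) ≤
      ENNReal.ofReal c * ENNReal.ofReal (Real.negMulLog (μ₀.real (η i))) +
        ENNReal.ofReal d * μ₀ (η i) := fun i => calc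
    _ ≤ ENNReal.ofReal (c * Real.negMulLog (μ₀.real (η i))) +
          ENNReal.ofReal (d * μ₀.real (η i)) :=
        (ENNReal.ofReal_le_ofReal (h i)).trans ENNReal.ofReal_add_le
    _ = _ := by
        rw [ENNReal.ofReal_mul' (Real.negMulLog_nonneg measureReal_nonneg measureReal_le_one),
          ENNReal.ofReal_mul' measureReal_nonneg, ofReal_measureReal]
  have hsum : ∑' i, μ₀ (η i) ≤ 1 :=
    (tsum_meas_le_meas_iUnion_of_disjoint μ₀ hη hd).trans prob_le_one
  calc partEntropy μ η
      ≤ ∑' i, (ENNReal.ofReal c * ENNReal.ofReal (Real.negMulLog (μ₀.real (η i))) +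
          ENNReal.ofReal d * μ₀ (η i)) := ENNReal.tsum_le_tsum hterm
    _ = ENNReal.ofReal c * partEntropy μ₀ η + ENNReal.ofReal d * ∑' i, μ₀ (η i) := by
        rw [ENNReal.tsum_add, ENNReal.tsum_mul_left, ENNReal.tsum_mul_left]
        rfl
    _ ≤ ENNReal.ofReal c * partEntropy μ₀ η + ENNReal.ofReal d := by
        gcongr
        exact mul_le_of_le_one_right' hsum

theorem join_partEntropy_le_of_close_general {X : Type*} [MeasurableSpace X]
    (T : X ≃ᵐ X) (ξ : ℕ → Set X) (hpart : IsCountablePartition ξ)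
    (μ₀ μ : Measure X) [IsProbabilityMeasure μ₀] [IsProbabilityMeasure μ]
    (r : ℕ) (ε : ℝ) (hε : 0 < ε) (hε6 : ε ≤ 1 / 6)
    (hclose : ∀ f : Fin (r + 1) → ℕ,
      |(μ₀ (joinAtom T ξ 0 (r + 1) f)).toReal - (μ (joinAtom T ξ 0 (r + 1) f)).toReal|
        ≤ ε * (μ (joinAtom T ξ 0 (r + 1) f)).toReal) :
    partEntropy μ (joinAtom T ξ 1 r) ≤
      (1 + ENNReal.ofReal (2 * ε)) * partEntropy μ₀ (joinAtom T ξ 1 r) +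
        ENNReal.ofReal (2 * ε * Real.log 3) := by
  obtain ⟨hmeas, hdisj, hcov⟩ := hpart
  have hcoarse : ∀ f : Fin r → ℕ, |μ₀.real (joinAtom T ξ 1 r f) - μ.real (joinAtom T ξ 1 r f)| ≤
      ε * μ.real (joinAtom T ξ 1 r f) := by
    intro f
    rw [← iUnion_joinAtom_zero_cons hcov]
    have hd : Pairwise (Disjoint on fun n => joinAtom T ξ 0 (r + 1) (Fin.cons n f)) :=
      (pairwise_disjoint_joinAtom hdisj 0 (r + 1)).comp_of_injective
        (Fin.cons_left_injective (α := fun _ => ℕ) f)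
    exact abs_measureReal_iUnion_sub_le (fun n => measurableSet_joinAtom T.measurable hmeas _ _ _)
      hd fun n => hclose _
  calc partEntropy μ (joinAtom T ξ 1 r)
      ≤ ENNReal.ofReal (1 + 2 * ε) * partEntropy μ₀ (joinAtom T ξ 1 r) +
          ENNReal.ofReal (2 * ε * Real.log 3) :=
        partEntropy_le_of_negMulLog_le (measurableSet_joinAtom T.measurable hmeas 1 r)
          (pairwise_disjoint_joinAtom hdisj 1 r) fun f =>
            Real.negMulLog_le_of_abs_sub_le_s7 hε.le (by linarith) measureReal_nonneg
              measureReal_le_one (hcoarse f)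
    _ = _ := by rw [ENNReal.ofReal_add zero_le_one (by positivity), ENNReal.ofReal_one]

/-- Let `T` be an automorphism of `(X, 𝓕)`, `ξ` a countable
measurable partition, `μ₀, μ` two `T`-invariant probability measures, `r ≥ 1`,
and `0 < ε ≤ 1/6`. If `|μ₀(A) - μ(A)| ≤ ε μ(A)` for every atom `A` of
`⋁_{i=0}^{r} T⁻ⁱ ξ`, then
`H_μ(⋁_{i=1}^{r} T⁻ⁱ ξ) ≤ (1 + 2ε) H_{μ₀}(⋁_{i=1}^{r} T⁻ⁱ ξ) + 2ε ln 3`. -/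
theorem join_partEntropy_le_of_close {X : Type*} [MeasurableSpace X]
    (T : X ≃ᵐ X) (ξ : ℕ → Set X) (hpart : IsCountablePartition ξ)
    (μ₀ μ : Measure X) [IsProbabilityMeasure μ₀] [IsProbabilityMeasure μ]
    (hinv₀ : MeasurePreserving T μ₀ μ₀) (hinv : MeasurePreserving T μ μ)
    (r : ℕ) (hr : 1 ≤ r) (ε : ℝ) (hε : 0 < ε) (hε6 : ε ≤ 1 / 6)
    (hclose : ∀ f : Fin (r + 1) → ℕ,
      |(μ₀ (joinAtom T ξ 0 (r + 1) f)).toReal - (μ (joinAtom T ξ 0 (r + 1) f)).toReal|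
        ≤ ε * (μ (joinAtom T ξ 0 (r + 1) f)).toReal) :
    partEntropy μ (joinAtom T ξ 1 r) ≤
      (1 + ENNReal.ofReal (2 * ε)) * partEntropy μ₀ (joinAtom T ξ 1 r) +
        ENNReal.ofReal (2 * ε * Real.log 3) :=
  join_partEntropy_le_of_close_general T ξ hpart μ₀ μ r ε hε hε6 hclose
end
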